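/- Let G be an orientable loopless 2-vertex embedding scheme (all edge signatures positive) with no non-trivial block and nonzero Euler genus. Adding one negative edge e parallel and consecutive to an existing edge f (appearing as e,f at one vertex and f,e at the other) yields a non-orientable scheme G' with the same number of faces as G, hence with eg(G') = eg(G) + 1 and non-orientable genus g(G') = eg(G) + 1 = g(G); moreover G' has no non-trivial block. -/

import Mathlib

/-- A signed permutation of length `n` (positions `Fin n`, each carrying a value in
`Fin n` and a sign; `true` = positive). It encodes a loopless 2-vertex embedding scheme. -/
abbrev SP (n : ℕ) := Fin n → Fin n × Bool

/-- `π` is a genuine signed permutation: the value map is a bijection. -/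
def IsSP {n : ℕ} (π : SP n) : Prop := Function.Bijective fun k => (π k).1

/-- The index map of the reversal of the interval `(i, j)`. -/
def revIdx {n : ℕ} (i j k : Fin n) : Fin n :=
  if h : i.val ≤ k.val ∧ k.val ≤ j.val then
    ⟨i.val + j.val - k.val, by have := j.isLt; omega⟩
  else k

/-- The reversal of the interval `(i, j)`: reverses the order of the entries in
positions `i, …, j` and flips their signs. -/
def reversal {n : ℕ} (i j : Fin n) (π : SP n) : SP n := fun k =>
  if i.val ≤ k.val ∧ k.val ≤ j.val then
    ((π (revIdx i j k)).1, !(π (revIdx i j k)).2)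
  else π k

/-- Apply a sequence of reversals. -/
def applySeq {n : ℕ} (L : List (Fin n × Fin n)) (π : SP n) : SP n :=
  L.foldl (fun σ x => reversal x.1 x.2 σ) π

/-- The identity signed permutation: increasing order, all signs positive. -/
def idSP (n : ℕ) : SP n := fun k => (k, true)

/-- The position of the edge (element) labelled `e` in `π`. -/
noncomputable def epos {n : ℕ} (π : SP n) (e : Fin n) : Fin n :=
  if h : ∃ p, (π p).1 = e then h.choose else e

/-- The sign (signature) of the edge labelled `e`. -/
noncomputable def sgnE {n : ℕ} (π : SP n) (e : Fin n) : Bool := (π (epos π e)).2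

/-- One step of face tracing in the 2-vertex embedding scheme encoded by `π`.
States are (edge just traversed, endpoint arrived at, local orientation); at a vertex
we move to the next edge in the rotation (direction given by the orientation) and
traverse it, flipping the orientation iff its signature is negative. -/
noncomputable def faceStep {n : ℕ} (π : SP n) :
    Fin n × Bool × Bool → Fin n × Bool × Bool := fun s =>
  let e' :=
    if s.2.1 then
      (if s.2.2 then (π (finRotate n (epos π s.1))).1
       else (π ((finRotate n).symm (epos π s.1))).1)
    else
      (if s.2.2 then finRotate n s.1 else (finRotate n).symm s.1)
  (e', !s.2.1, Bool.xor s.2.2 (!(sgnE π e')))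

/-- The number of facial cycles of the scheme encoded by `π` (each face is traced
twice, once per orientation). -/
noncomputable def numFaces {n : ℕ} (π : SP n) : ℕ :=
  Nat.card (Quot fun x y : Fin n × Bool × Bool => y = faceStep π x) / 2

/-- The Euler genus of the scheme encoded by `π`: `2 - v + e - f` with `v = 2`. -/
noncomputable def eulerGenus {n : ℕ} (π : SP n) : ℤ :=
  (n : ℤ) - numFaces π

open Classical in
/-- The non-orientable genus: equals the Euler genus for non-orientable schemes,
`0` for planar orientable schemes, and Euler genus `+ 1` otherwise. -/
noncomputable def nonOrientGenus {n : ℕ} (π : SP n) : ℤ :=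
  if ∃ p, (π p).2 = false then eulerGenus π
  else if eulerGenus π = 0 then 0 else eulerGenus π + 1

/-- Positions `a ≤ b` delimit a positive block: all signs positive, increasing frames,
and the values in the interval are exactly the integer interval `[(π a).1, (π b).1]`. -/
def IsPosBlock {n : ℕ} (π : SP n) (a b : Fin n) : Prop :=
  a ≤ b ∧ (∀ k, a ≤ k → k ≤ b → (π k).2 = true) ∧
    (π a).1 < (π b).1 ∧
    (∀ k, a ≤ k → k ≤ b → (π a).1 ≤ (π k).1 ∧ (π k).1 ≤ (π b).1) ∧
    ∀ m : Fin n, (π a).1 ≤ m → m ≤ (π b).1 → ∃ p, a ≤ p ∧ p ≤ b ∧ (π p).1 = m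

/-- Positions `a ≤ b` delimit a negative block: all signs negative, decreasing frames,
and the values are exactly the integer interval `[(π b).1, (π a).1]`. -/
def IsNegBlock {n : ℕ} (π : SP n) (a b : Fin n) : Prop :=
  a ≤ b ∧ (∀ k, a ≤ k → k ≤ b → (π k).2 = false) ∧
    (π b).1 < (π a).1 ∧
    (∀ k, a ≤ k → k ≤ b → (π b).1 ≤ (π k).1 ∧ (π k).1 ≤ (π a).1) ∧
    ∀ m : Fin n, (π b).1 ≤ m → m ≤ (π a).1 → ∃ p, a ≤ p ∧ p ≤ b ∧ (π p).1 = m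

/-- A positive block is sorted (trivial) if its entries increase one by one. -/
def PosBlockSorted {n : ℕ} (π : SP n) (a b : Fin n) : Prop :=
  ∀ k : Fin n, a ≤ k → k ≤ b → ((π k).1 : ℕ) = (π a).1 + (k.val - a.val)

/-- A negative block is sorted (trivial) if its entries decrease one by one. -/
def NegBlockSorted {n : ℕ} (π : SP n) (a b : Fin n) : Prop :=
  ∀ k : Fin n, a ≤ k → k ≤ b → ((π k).1 : ℕ) = (π a).1 - (k.val - a.val)

/-- `π` contains a non-trivial (unsorted) block. -/
def HasNontrivialBlock {n : ℕ} (π : SP n) : Prop :=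
  ∃ a b : Fin n, (IsPosBlock π a b ∧ ¬ PosBlockSorted π a b) ∨
    (IsNegBlock π a b ∧ ¬ NegBlockSorted π a b)

/-- Lift the old edge labels to `Fin (n+1)`, making room for the new label
`(π p).1 + 1` right after the label of the edge `f = (π p).1`. -/
def liftVal {n : ℕ} (π : SP n) (p : Fin n) (v : Fin n) : Fin (n + 1) :=
  if v.val ≤ (π p).1.val then ⟨v.val, by have := v.isLt; omega⟩
  else ⟨v.val + 1, by have := v.isLt; omega⟩

/-- Add a negative edge `e` parallel and consecutive to the edge `f` occupying
position `p`: at the vertex with identity rotation the new edge follows `f`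
(labels `f, e`), at the other vertex it precedes `f` (order `e, f`). -/
def addEdge {n : ℕ} (π : SP n) (p : Fin n) : SP (n + 1) := fun q =>
  if h1 : q.val < p.val then
    (liftVal π p (π ⟨q.val, by have := p.isLt; omega⟩).1,
     (π ⟨q.val, by have := p.isLt; omega⟩).2)
  else if h2 : q.val = p.val then
    (⟨(π p).1.val + 1, by have := (π p).1.isLt; omega⟩, false)
  else
    (liftVal π p (π ⟨q.val - 1, by have := q.isLt; omega⟩).1,
     (π ⟨q.val - 1, by have := q.isLt; omega⟩).2)

/-!
Inserting `e` next to `f` changes the rotation at each vertex only by putting `e` into the gap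
beside `f`: after `f` at the vertex with the identity rotation, before it at the other one
(`IsInsertion`). Hence face tracing in `G'` agrees with that in `G` except at the two states that
leave `f` through this gap (`crossing`): each now runs along the twisted edge `e` and then
continues where the *other* crossing state continued in `G`. Interchanging the two crossing
states therefore matches the facial walks of `G'` with those of `G`, so the number of faces is
unchanged.

A positive block of `G'` avoids the negative edge `e` and hence, by the interval property, also
its label; so it is a positive block of `G` shifted in positions and labels, and these shifts
preserve sortedness. As `e` is the only negative edge, `G'` has no negative block.
-/

open Equiv

section StepQuot

variable {α β : Type*}

abbrev StepQuot (f : α → α) : Type _ := Quot fun x y : α => y = f x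

def StepQuot.mk (f : α → α) (x : α) : StepQuot f := Quot.mk _ x

theorem StepQuot.mk_apply (f : α → α) (x : α) : StepQuot.mk f (f x) = StepQuot.mk f x :=
  (Quot.sound (r := fun a b : α => b = f a) rfl).symm

def StepQuot.congr {f : α → α} {g : β → β} (φ : α → β) (ψ : β → α)
    (hφ : ∀ x, StepQuot.mk g (φ (f x)) = StepQuot.mk g (φ x))
    (hψ : ∀ y, StepQuot.mk f (ψ (g y)) = StepQuot.mk f (ψ y))
    (hψφ : ∀ x, StepQuot.mk f (ψ (φ x)) = StepQuot.mk f x)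
    (hφψ : ∀ y, StepQuot.mk g (φ (ψ y)) = StepQuot.mk g y) :
    StepQuot f ≃ StepQuot g where
  toFun := Quot.lift (StepQuot.mk g ∘ φ) fun x _ h => h ▸ (hφ x).symm
  invFun := Quot.lift (StepQuot.mk f ∘ ψ) fun y _ h => h ▸ (hψ y).symm
  left_inv := Quot.ind hψφ
  right_inv := Quot.ind hφψ

end StepQuot

namespace Fin

theorem val_succAbove {n : ℕ} (h : Fin (n + 1)) (x : Fin n) :
    (h.succAbove x : ℕ) = if (x : ℕ) < h then (x : ℕ) else (x : ℕ) + 1 := by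
  unfold succAbove
  split_ifs <;> simp_all [lt_def]

theorem val_finRotate {n : ℕ} (x : Fin (n + 1)) :
    (finRotate (n + 1) x : ℕ) = if (x : ℕ) = n then 0 else (x : ℕ) + 1 := by
  simp only [coe_finRotate, Fin.ext_iff, val_last]

theorem val_succAbove_eq_of_not_mem {n : ℕ} {h : Fin (n + 1)} {x y z : Fin n}
    (hxz : x ≤ z) (hzy : z ≤ y) (hh : ¬ (h.succAbove x ≤ h ∧ h ≤ h.succAbove y)) :
    (h.succAbove z : ℕ) = h.succAbove x + (z - x) := by
  simp only [Fin.le_def, val_succAbove] at *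
  split_ifs at * <;> omega

end Fin

def Equiv.Perm.orient {α : Type*} (ρ : Perm α) (o : Bool) : Perm α := if o then ρ else ρ.symm

/-- `ρ'` is `ρ` with the new point `h` inserted right after `a` in its cycle,
the old points being renumbered by `h.succAbove`. -/
structure IsInsertion {n : ℕ} (ρ' : Perm (Fin (n + 1))) (ρ : Perm (Fin n)) (h : Fin (n + 1))
    (a : Fin n) : Prop where
  apply_succAbove_self : ρ' (h.succAbove a) = h
  apply_hole : ρ' h = h.succAbove (ρ a)
  apply_succAbove_of_ne : ∀ x, x ≠ a → ρ' (h.succAbove x) = h.succAbove (ρ x)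

namespace IsInsertion

variable {n : ℕ} {ρ' : Perm (Fin (n + 1))} {ρ : Perm (Fin n)} {h : Fin (n + 1)} {a : Fin n}

theorem symm_apply_hole (hρ : IsInsertion ρ' ρ h a) : ρ'.symm h = h.succAbove a :=
  ρ'.symm_apply_eq.2 hρ.apply_succAbove_self.symm

theorem symm_apply_succAbove_self (hρ : IsInsertion ρ' ρ h a) :
    ρ'.symm (h.succAbove (ρ a)) = h :=
  ρ'.symm_apply_eq.2 hρ.apply_hole.symm

theorem symm_apply_succAbove_of_ne (hρ : IsInsertion ρ' ρ h a) {y : Fin n} (hy : y ≠ ρ a) :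
    ρ'.symm (h.succAbove y) = h.succAbove (ρ.symm y) := by
  rw [ρ'.symm_apply_eq, hρ.apply_succAbove_of_ne _ (by rintro rfl; simp at hy),
    Equiv.apply_symm_apply]

theorem orient_apply_succAbove (hρ : IsInsertion ρ' ρ h a) (o : Bool) (x : Fin n) :
    ρ'.orient o (h.succAbove x) =
      if (if o then x else ρ.symm x) = a then h else h.succAbove (ρ.orient o x) := by
  cases o
  · by_cases hx : ρ.symm x = a
    · obtain rfl : x = ρ a := by rw [← hx, Equiv.apply_symm_apply]
      simp [Perm.orient, hρ.symm_apply_succAbove_self]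
    · have hx' : x ≠ ρ a := fun h' => hx (by rw [h', Equiv.symm_apply_apply])
      simp [Perm.orient, hx, hρ.symm_apply_succAbove_of_ne hx']
  · by_cases hx : x = a
    · simp [Perm.orient, hx, hρ.apply_succAbove_self]
    · simp [Perm.orient, hx, hρ.apply_succAbove_of_ne _ hx]

theorem orient_apply_hole (hρ : IsInsertion ρ' ρ h a) (o : Bool) :
    ρ'.orient o h = h.succAbove (if o then ρ a else a) := by
  cases o
  · simp [Perm.orient, hρ.symm_apply_hole]
  · simp [Perm.orient, hρ.apply_hole]

theorem permCongr (hρ : IsInsertion ρ' ρ h a) {σ : Perm (Fin n)} {σ' : Perm (Fin (n + 1))}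
    {k : Fin (n + 1)} (hσ : ∀ x, σ' (h.succAbove x) = k.succAbove (σ x)) (hσh : σ' h = k) :
    IsInsertion (σ'.permCongr ρ') (σ.permCongr ρ) k (σ a) := by
  have hσ_symm : ∀ x, σ'.symm (k.succAbove x) = h.succAbove (σ.symm x) := fun x => by
    rw [σ'.symm_apply_eq, hσ, Equiv.apply_symm_apply]
  have hσh_symm : σ'.symm k = h := by rw [σ'.symm_apply_eq, hσh]
  refine ⟨?_, ?_, fun x hx => ?_⟩
  · simp [hσ_symm, hρ.apply_succAbove_self, hσh]
  · simp [hσh_symm, hρ.apply_hole, hσ]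
  · have hx' : σ.symm x ≠ a := fun hx' => hx (by rw [← hx', Equiv.apply_symm_apply])
    simp [hσ_symm, hρ.apply_succAbove_of_ne _ hx', hσ]

end IsInsertion

theorem isInsertion_finRotate {n : ℕ} {h : Fin (n + 1)} {a : Fin n}
    (ha : finRotate (n + 1) (h.succAbove a) = h) :
    IsInsertion (finRotate (n + 1)) (finRotate n) h a := by
  cases n with
  | zero => exact a.elim0
  | succ m =>
    have := a.isLt
    have := h.isLt
    have ha' := congrArg Fin.val ha
    simp only [Fin.val_finRotate, Fin.val_succAbove] at ha'
    refine ⟨ha, Fin.ext ?_, fun x hx => Fin.ext ?_⟩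
    · simp only [Fin.val_finRotate, Fin.val_succAbove]
      split_ifs at ha' ⊢ <;> omega
    · have := Fin.val_ne_of_ne hx
      simp only [Fin.val_finRotate, Fin.val_succAbove]
      split_ifs at ha' ⊢ <;> omega

section Scheme

variable {n : ℕ} {π : SP n}

noncomputable def IsSP.labelEquiv (hπ : IsSP π) : Perm (Fin n) := Equiv.ofBijective _ hπ

@[simp]
theorem IsSP.labelEquiv_apply (hπ : IsSP π) (q : Fin n) : hπ.labelEquiv q = (π q).1 := rfl

theorem IsSP.epos_eq (hπ : IsSP π) (e : Fin n) : epos π e = hπ.labelEquiv.symm e := by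
  have he : ∃ q, (π q).1 = e := hπ.2 e
  rw [epos, dif_pos he, Equiv.eq_symm_apply]
  exact he.choose_spec

/-- The rotations at the two vertices, as permutations of the edge labels: the identity order
at vertex `false`, the order of `π` at vertex `true`. -/
noncomputable def IsSP.vertexRot (hπ : IsSP π) : Bool → Perm (Fin n)
  | false => finRotate n
  | true => hπ.labelEquiv.permCongr (finRotate n)

theorem IsSP.vertexRot_true_symm_apply (hπ : IsSP π) (e : Fin n) :
    (hπ.vertexRot true).symm e = (π ((finRotate n).symm (hπ.labelEquiv.symm e))).1 := rfl

theorem IsSP.faceStep_apply (hπ : IsSP π) (e : Fin n) (v o : Bool) :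
    faceStep π (e, v, o) =
      ((hπ.vertexRot v).orient o e, !v, xor o !(sgnE π ((hπ.vertexRot v).orient o e))) := by
  cases v <;> cases o <;>
    simp only [faceStep, Perm.orient, hπ.epos_eq] <;> rfl

theorem sgnE_eq_true_of_forall_pos (hall : ∀ q, (π q).2 = true) (e : Fin n) : sgnE π e = true :=
  hall _

theorem IsSP.faceStep_apply_of_forall_pos (hπ : IsSP π) (hall : ∀ q, (π q).2 = true)
    (e : Fin n) (v o : Bool) : faceStep π (e, v, o) = ((hπ.vertexRot v).orient o e, !v, o) := by
  simp [hπ.faceStep_apply, sgnE_eq_true_of_forall_pos hall]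

theorem IsSP.faceStep_snd_of_forall_pos (hπ : IsSP π) (hall : ∀ q, (π q).2 = true)
    (s : Fin n × Bool × Bool) : (faceStep π s).2 = (!s.2.1, s.2.2) := by
  simp [hπ.faceStep_apply_of_forall_pos hall]

end Scheme

section AddEdge

variable {n : ℕ} (π : SP n) (p : Fin n)

theorem liftVal_eq_succAbove : liftVal π p = (π p).1.succ.succAbove := by
  ext v
  rw [liftVal, Fin.val_succAbove, Fin.val_succ]
  split_ifs <;> first | rfl | omega

theorem addEdge_castSucc : addEdge π p p.castSucc = ((π p).1.succ, false) := by
  simp only [addEdge, Fin.val_castSucc, lt_self_iff_false, ↓reduceDIte]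
  rfl

theorem addEdge_succAbove (q : Fin n) :
    addEdge π p (p.castSucc.succAbove q) = ((π p).1.succ.succAbove (π q).1, (π q).2) := by
  rw [← liftVal_eq_succAbove]
  rcases lt_or_ge q p with hq | hq
  · rw [Fin.succAbove_castSucc_of_lt _ _ hq, addEdge,
      dif_pos (show (q.castSucc : ℕ) < p from hq)]
    rfl
  · have hq' := Fin.le_def.1 hq
    rw [Fin.succAbove_castSucc_of_le _ _ hq, addEdge, dif_neg (by simp only [Fin.val_succ]; omega),
      dif_neg (by simp only [Fin.val_succ]; omega)]
    rfl

variable {π}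

theorem isSP_addEdge (hπ : IsSP π) : IsSP (addEdge π p) := by
  refine Finite.injective_iff_bijective.1 fun x y hxy => ?_
  rcases Fin.eq_self_or_eq_succAbove p.castSucc x with rfl | ⟨x, rfl⟩ <;>
  rcases Fin.eq_self_or_eq_succAbove p.castSucc y with rfl | ⟨y, rfl⟩ <;>
  simp only [addEdge_castSucc, addEdge_succAbove] at hxy
  · rfl
  · exact absurd hxy.symm (Fin.succAbove_ne _ _)
  · exact absurd hxy (Fin.succAbove_ne _ _)
  · rw [Fin.succAbove_right_inj] at hxy ⊢
    exact hπ.1 hxy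

end AddEdge

section Insertion

variable {n : ℕ} {π : SP n} (hπ : IsSP π) (p : Fin n)
include hπ

theorem IsSP.labelEquiv_addEdge_succAbove (q : Fin n) :
    (isSP_addEdge p hπ).labelEquiv (p.castSucc.succAbove q) =
      (π p).1.succ.succAbove (hπ.labelEquiv q) := by
  simp [addEdge_succAbove]

theorem IsSP.labelEquiv_addEdge_castSucc :
    (isSP_addEdge p hπ).labelEquiv p.castSucc = (π p).1.succ := by
  simp [addEdge_castSucc]

theorem IsSP.sgnE_addEdge_succ : sgnE (addEdge π p) (π p).1.succ = false := by
  rw [sgnE, (isSP_addEdge p hπ).epos_eq,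
    (Equiv.symm_apply_eq _).2 (hπ.labelEquiv_addEdge_castSucc p).symm, addEdge_castSucc]

theorem IsSP.sgnE_addEdge_succAbove (e : Fin n) :
    sgnE (addEdge π p) ((π p).1.succ.succAbove e) = sgnE π e := by
  have he := hπ.labelEquiv_addEdge_succAbove p (hπ.labelEquiv.symm e)
  rw [Equiv.apply_symm_apply] at he
  rw [sgnE, (isSP_addEdge p hπ).epos_eq, (Equiv.symm_apply_eq _).2 he.symm, addEdge_succAbove,
    sgnE, hπ.epos_eq]

theorem IsSP.isInsertion_vertexRot_addEdge_false :
    IsInsertion ((isSP_addEdge p hπ).vertexRot false) (hπ.vertexRot false) (π p).1.succ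
      (π p).1 := by
  refine isInsertion_finRotate ?_
  rw [Fin.succAbove_succ_self, Fin.ext_iff, Fin.val_finRotate]
  simp [(π p).1.isLt.ne]

theorem IsSP.isInsertion_vertexRot_addEdge_true :
    IsInsertion ((isSP_addEdge p hπ).vertexRot true) (hπ.vertexRot true) (π p).1.succ
      ((hπ.vertexRot true).symm (π p).1) := by
  have hrot : IsInsertion (finRotate (n + 1)) (finRotate n) p.castSucc ((finRotate n).symm p) := by
    refine isInsertion_finRotate ?_
    obtain ⟨a, rfl⟩ := (finRotate n).surjective p
    rw [Equiv.symm_apply_apply, Fin.ext_iff]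
    cases n with
    | zero => exact a.elim0
    | succ m =>
      have := a.isLt
      simp only [Fin.val_finRotate, Fin.val_succAbove, Fin.val_castSucc]
      split_ifs <;> omega
  have ha : (hπ.vertexRot true).symm (π p).1 = hπ.labelEquiv ((finRotate n).symm p) := by
    rw [hπ.vertexRot_true_symm_apply, ← hπ.labelEquiv_apply p, Equiv.symm_apply_apply]
    rfl
  rw [ha]
  exact hrot.permCongr (hπ.labelEquiv_addEdge_succAbove p) (hπ.labelEquiv_addEdge_castSucc p)

end Insertion

section FaceTracing

variable {n : ℕ} (π : SP n) (p : Fin n)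

def liftState (s : Fin n × Bool × Bool) : Fin (n + 1) × Bool × Bool :=
  ((π p).1.succ.succAbove s.1, s.2)

theorem eq_succ_or_eq_liftState (y : Fin (n + 1) × Bool × Bool) :
    (∃ v o, y = ((π p).1.succ, v, o)) ∨ ∃ s, y = liftState π p s := by
  obtain ⟨x, v, o⟩ := y
  rcases Fin.eq_self_or_eq_succAbove (π p).1.succ x with rfl | ⟨e, rfl⟩
  · exact Or.inl ⟨v, o, rfl⟩
  · exact Or.inr ⟨(e, v, o), rfl⟩

/-- The two states of face tracing that leave `f = (π p).1` through the gap where the new edge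
is inserted: forwards at vertex `false` and backwards at vertex `true`. -/
def crossing (v : Bool) : Fin n × Bool × Bool := ((π p).1, v, !v)

variable {π} (hπ : IsSP π) (hall : ∀ q, (π q).2 = true)
include hπ hall

theorem faceStep_not_mem_range_crossing (s : Fin n × Bool × Bool)
    (hs : s ∈ Set.range (crossing π p)) : faceStep π s ∉ Set.range (crossing π p) := by
  obtain ⟨v, rfl⟩ := hs
  rintro ⟨w, hw⟩
  cases v <;> cases w <;> simp [crossing, hπ.faceStep_apply_of_forall_pos hall] at hw

theorem faceStep_addEdge_liftState (s : Fin n × Bool × Bool) :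
    faceStep (addEdge π p) (liftState π p s) =
      if s ∈ Set.range (crossing π p) ∨ faceStep π s ∈ Set.range (crossing π p) then
        ((π p).1.succ, !s.2.1, !s.2.2)
      else liftState π p (faceStep π s) := by
  obtain ⟨e, v, o⟩ := s
  cases v <;> cases o <;>
    simp only [liftState, (isSP_addEdge p hπ).faceStep_apply,
      (hπ.isInsertion_vertexRot_addEdge_false p).orient_apply_succAbove,
      (hπ.isInsertion_vertexRot_addEdge_true p).orient_apply_succAbove] <;>
    split_ifs <;>
    simp_all [crossing, Perm.orient, hπ.faceStep_apply_of_forall_pos hall, hπ.sgnE_addEdge_succ,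
      hπ.sgnE_addEdge_succAbove, sgnE_eq_true_of_forall_pos hall, Equiv.eq_symm_apply]

theorem faceStep_addEdge_succ (v o : Bool) :
    faceStep (addEdge π p) ((π p).1.succ, v, o) =
      liftState π p (if o = v then crossing π p !v else faceStep π (crossing π p v)) := by
  cases v <;> cases o <;>
    simp only [(isSP_addEdge p hπ).faceStep_apply,
      (hπ.isInsertion_vertexRot_addEdge_false p).orient_apply_hole,
      (hπ.isInsertion_vertexRot_addEdge_true p).orient_apply_hole] <;>
    simp [liftState, crossing, Perm.orient, hπ.faceStep_apply_of_forall_pos hall,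
      hπ.sgnE_addEdge_succAbove, sgnE_eq_true_of_forall_pos hall, -Fin.succAbove_succ_self]

end FaceTracing

section FaceCount

variable {n : ℕ} (π : SP n) (p : Fin n)

def swapCrossing : Perm (Fin n × Bool × Bool) :=
  Equiv.swap (crossing π p true) (crossing π p false)

theorem swapCrossing_crossing (v : Bool) :
    swapCrossing π p (crossing π p v) = crossing π p !v := by
  cases v <;> simp [swapCrossing]

theorem swapCrossing_of_not_mem {s : Fin n × Bool × Bool} (hs : s ∉ Set.range (crossing π p)) :
    swapCrossing π p s = s :=
  Equiv.swap_apply_of_ne_of_ne (fun h => hs ⟨_, h.symm⟩) (fun h => hs ⟨_, h.symm⟩)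

def collapse (y : Fin (n + 1) × Bool × Bool) : Fin n × Bool × Bool :=
  Fin.insertNth (α := fun _ => Bool × Bool → Fin n × Bool × Bool) (π p).1.succ
    (fun vo => crossing π p vo.1) (fun e vo => swapCrossing π p (e, vo)) y.1 y.2

theorem collapse_liftState (s : Fin n × Bool × Bool) :
    collapse π p (liftState π p s) = swapCrossing π p s := by
  simp [collapse, liftState]

theorem collapse_succ (v o : Bool) : collapse π p ((π p).1.succ, v, o) = crossing π p v := by
  simp [collapse]

theorem collapse_liftState_swapCrossing (x : Fin n × Bool × Bool) :
    collapse π p (liftState π p (swapCrossing π p x)) = x := by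
  rw [collapse_liftState, swapCrossing, Equiv.swap_apply_self]

variable {π} (hπ : IsSP π) (hall : ∀ q, (π q).2 = true)
include hπ hall

theorem faceStep_addEdge_liftState_crossing (v : Bool) :
    faceStep (addEdge π p) (liftState π p (crossing π p v)) = ((π p).1.succ, !v, v) := by
  rw [faceStep_addEdge_liftState p hπ hall, if_pos (Or.inl ⟨v, rfl⟩)]
  simp [crossing]

theorem mk_collapse_faceStep_addEdge (y : Fin (n + 1) × Bool × Bool) :
    StepQuot.mk (faceStep π) (collapse π p (faceStep (addEdge π p) y)) =
      StepQuot.mk (faceStep π) (collapse π p y) := by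
  rcases eq_succ_or_eq_liftState π p y with ⟨v, o, rfl⟩ | ⟨s, rfl⟩
  · rw [faceStep_addEdge_succ p hπ hall, collapse_liftState, collapse_succ]
    split_ifs with hov
    · rw [swapCrossing_crossing, Bool.not_not]
    · rw [swapCrossing_of_not_mem π p
        (faceStep_not_mem_range_crossing p hπ hall _ ⟨v, rfl⟩), StepQuot.mk_apply]
  · rw [faceStep_addEdge_liftState p hπ hall, collapse_liftState]
    split_ifs with hc
    · rw [collapse_succ]
      rcases hc with ⟨w, rfl⟩ | ⟨w, hw⟩
      · rw [swapCrossing_crossing]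
        rfl
      · have hs : s ∉ Set.range (crossing π p) :=
          fun h => faceStep_not_mem_range_crossing p hπ hall _ h ⟨w, hw⟩
        have hvw : w = !s.2.1 := by
          change (crossing π p w).2.1 = (faceStep π s).2.1
          rw [hw]
        rw [swapCrossing_of_not_mem π p hs, ← hvw, hw, StepQuot.mk_apply]
    · rw [not_or] at hc
      rw [collapse_liftState, swapCrossing_of_not_mem π p hc.1,
        swapCrossing_of_not_mem π p hc.2, StepQuot.mk_apply]

theorem mk_liftState_swapCrossing_faceStep (x : Fin n × Bool × Bool) :
    StepQuot.mk (faceStep (addEdge π p)) (liftState π p (swapCrossing π p (faceStep π x))) =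
      StepQuot.mk (faceStep (addEdge π p)) (liftState π p (swapCrossing π p x)) := by
  by_cases hx : x ∈ Set.range (crossing π p)
  · obtain ⟨v, rfl⟩ := hx
    rw [swapCrossing_of_not_mem π p (faceStep_not_mem_range_crossing p hπ hall _ ⟨v, rfl⟩),
      swapCrossing_crossing, ← StepQuot.mk_apply _ (liftState π p (crossing π p !v)),
      faceStep_addEdge_liftState_crossing p hπ hall, Bool.not_not,
      ← StepQuot.mk_apply _ ((π p).1.succ, v, !v), faceStep_addEdge_succ p hπ hall,
      if_neg (by simp)]
  by_cases hFx : faceStep π x ∈ Set.range (crossing π p)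
  · obtain ⟨v, hv⟩ := hFx
    have hvx : (!x.2.1, x.2.2) = (v, !v) := by
      rw [← (hπ.faceStep_snd_of_forall_pos hall x), ← hv]
      rfl
    simp only [Prod.mk.injEq] at hvx
    rw [← hv, swapCrossing_crossing, swapCrossing_of_not_mem π p hx,
      ← StepQuot.mk_apply _ (liftState π p x), faceStep_addEdge_liftState p hπ hall,
      if_pos (Or.inr ⟨v, hv⟩), hvx.1, hvx.2, Bool.not_not,
      ← StepQuot.mk_apply _ ((π p).1.succ, v, v), faceStep_addEdge_succ p hπ hall, if_pos rfl]
  · rw [swapCrossing_of_not_mem π p hFx, swapCrossing_of_not_mem π p hx,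
      ← StepQuot.mk_apply _ (liftState π p x), faceStep_addEdge_liftState p hπ hall,
      if_neg (not_or.2 ⟨hx, hFx⟩)]

theorem mk_liftState_swapCrossing_collapse (y : Fin (n + 1) × Bool × Bool) :
    StepQuot.mk (faceStep (addEdge π p)) (liftState π p (swapCrossing π p (collapse π p y))) =
      StepQuot.mk (faceStep (addEdge π p)) y := by
  rcases eq_succ_or_eq_liftState π p y with ⟨v, o, rfl⟩ | ⟨s, rfl⟩
  · rw [collapse_succ, swapCrossing_crossing]
    rcases Bool.eq_or_eq_not o v with rfl | rfl
    · rw [← StepQuot.mk_apply _ ((π p).1.succ, o, o), faceStep_addEdge_succ p hπ hall,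
        if_pos rfl]
    · rw [← StepQuot.mk_apply _ (liftState π p _),
        faceStep_addEdge_liftState_crossing p hπ hall, Bool.not_not]
  · rw [collapse_liftState, swapCrossing, Equiv.swap_apply_self]

noncomputable def faceClassesEquiv :
    StepQuot (faceStep (addEdge π p)) ≃ StepQuot (faceStep π) :=
  StepQuot.congr (collapse π p) (liftState π p ∘ swapCrossing π p)
    (mk_collapse_faceStep_addEdge p hπ hall) (mk_liftState_swapCrossing_faceStep p hπ hall)
    (mk_liftState_swapCrossing_collapse p hπ hall)
    (fun x => congrArg _ (collapse_liftState_swapCrossing π p x))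

theorem numFaces_addEdge : numFaces (addEdge π p) = numFaces π := by
  rw [numFaces, numFaces, Nat.card_congr (faceClassesEquiv p hπ hall)]

end FaceCount

section Blocks

variable {n : ℕ} {π : SP n} (p : Fin n)

theorem not_isNegBlock_addEdge (hall : ∀ q, (π q).2 = true) (a b : Fin (n + 1)) :
    ¬ IsNegBlock (addEdge π p) a b := by
  rintro ⟨hab, hneg, hlt, -, -⟩
  have hnew : ∀ k, a ≤ k → k ≤ b → k = p.castSucc := by
    intro k hak hkb
    rcases Fin.eq_self_or_eq_succAbove p.castSucc k with rfl | ⟨q, rfl⟩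
    · rfl
    · have hk := hneg _ hak hkb
      rw [addEdge_succAbove, hall] at hk
      exact absurd hk (by decide)
  rw [hnew a le_rfl hab, hnew b hab le_rfl] at hlt
  exact lt_irrefl _ hlt

variable {a b : Fin (n + 1)}

theorem castSucc_not_mem_of_isPosBlock_addEdge (hab : IsPosBlock (addEdge π p) a b) :
    ¬ (a ≤ p.castSucc ∧ p.castSucc ≤ b) := fun h => by
  have hsign := hab.2.1 _ h.1 h.2
  rw [addEdge_castSucc] at hsign
  exact Bool.false_ne_true hsign

theorem succ_not_mem_of_isPosBlock_addEdge (hπ : IsSP π) (hab : IsPosBlock (addEdge π p) a b) :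
    ¬ ((addEdge π p a).1 ≤ (π p).1.succ ∧ (π p).1.succ ≤ (addEdge π p b).1) := by
  rintro ⟨h1, h2⟩
  obtain ⟨k, hak, hkb, hk⟩ := hab.2.2.2.2 _ h1 h2
  obtain rfl : k = p.castSucc := (isSP_addEdge p hπ).1 (by simp only [hk, addEdge_castSucc])
  exact castSucc_not_mem_of_isPosBlock_addEdge p hab ⟨hak, hkb⟩

variable {ra rb : Fin n}

theorem isPosBlock_of_isPosBlock_addEdge (hall : ∀ q, (π q).2 = true)
    (hab : IsPosBlock (addEdge π p) (p.castSucc.succAbove ra) (p.castSucc.succAbove rb)) :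
    IsPosBlock π ra rb := by
  obtain ⟨hle, -, hlt, hbound, hcover⟩ := hab
  simp only [addEdge_succAbove, Fin.succAbove_le_succAbove_iff,
    Fin.succAbove_lt_succAbove_iff] at hle hlt hbound hcover
  refine ⟨hle, fun k _ _ => hall k, hlt, fun k h1 h2 => ?_, fun m h1 h2 => ?_⟩
  · simpa [addEdge_succAbove, Fin.succAbove_le_succAbove_iff] using
      hbound (p.castSucc.succAbove k) (Fin.succAbove_le_succAbove_iff.2 h1)
        (Fin.succAbove_le_succAbove_iff.2 h2)
  · obtain ⟨k, hak, hkb, hk⟩ := hcover ((π p).1.succ.succAbove m)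
      (Fin.succAbove_le_succAbove_iff.2 h1) (Fin.succAbove_le_succAbove_iff.2 h2)
    rcases Fin.eq_self_or_eq_succAbove p.castSucc k with rfl | ⟨r, rfl⟩
    · rw [addEdge_castSucc] at hk
      exact absurd hk (Fin.ne_succAbove _ _)
    · rw [addEdge_succAbove] at hk
      exact ⟨r, Fin.succAbove_le_succAbove_iff.1 hak, Fin.succAbove_le_succAbove_iff.1 hkb,
        Fin.succAbove_right_injective hk⟩

theorem posBlockSorted_addEdge (hπ : IsSP π) (hall : ∀ q, (π q).2 = true)
    (hab : IsPosBlock (addEdge π p) (p.castSucc.succAbove ra) (p.castSucc.succAbove rb))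
    (hsorted : PosBlockSorted π ra rb) :
    PosBlockSorted (addEdge π p) (p.castSucc.succAbove ra) (p.castSucc.succAbove rb) := by
  intro k hak hkb
  rcases Fin.eq_self_or_eq_succAbove p.castSucc k with rfl | ⟨r, rfl⟩
  · exact absurd ⟨hak, hkb⟩ (castSucc_not_mem_of_isPosBlock_addEdge p hab)
  rw [Fin.succAbove_le_succAbove_iff] at hak hkb
  obtain ⟨hlo, hhi⟩ := (isPosBlock_of_isPosBlock_addEdge p hall hab).2.2.2.1 r hak hkb
  have hpos := Fin.val_succAbove_eq_of_not_mem hak hkb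
    (castSucc_not_mem_of_isPosBlock_addEdge p hab)
  have hlabel := Fin.val_succAbove_eq_of_not_mem hlo hhi <| by
    simpa only [addEdge_succAbove] using succ_not_mem_of_isPosBlock_addEdge p hπ hab
  have hr := hsorted r hak hkb
  rw [Fin.le_def] at hak hlo
  simp only [addEdge_succAbove]
  omega

theorem not_hasNontrivialBlock_addEdge (hπ : IsSP π) (hall : ∀ q, (π q).2 = true)
    (hnb : ¬ HasNontrivialBlock π) : ¬ HasNontrivialBlock (addEdge π p) := by
  rintro ⟨a, b, ⟨hab, hunsorted⟩ | ⟨hneg, -⟩⟩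
  · have hmem := castSucc_not_mem_of_isPosBlock_addEdge p hab
    obtain ⟨ra, rfl⟩ := Fin.exists_succAbove_eq fun h => hmem ⟨h.le, h.ge.trans hab.1⟩
    obtain ⟨rb, rfl⟩ := Fin.exists_succAbove_eq fun h => hmem ⟨hab.1.trans h.le, h.ge⟩
    refine hunsorted (posBlockSorted_addEdge p hπ hall hab ?_)
    by_contra hunsorted'
    exact hnb ⟨ra, rb, Or.inl ⟨isPosBlock_of_isPosBlock_addEdge p hall hab, hunsorted'⟩⟩
  · exact not_isNegBlock_addEdge p hall a b hneg

end Blocks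

/-- Let `G` be an orientable loopless 2-vertex embedding scheme (all signatures
positive) with no non-trivial block and nonzero Euler genus. Adding one negative edge
parallel and consecutive to an existing edge yields a non-orientable scheme `G'` with
the same number of faces, hence `eg(G') = eg(G) + 1` and non-orientable genus
`g(G') = eg(G) + 1 = g(G)`; moreover `G'` has no non-trivial block. -/
theorem addEdge_nonorientable {n : ℕ} (π : SP n) (hπ : IsSP π)
    (hall : ∀ q, (π q).2 = true) (hnoblock : ¬ HasNontrivialBlock π)
    (hg : eulerGenus π ≠ 0) (p : Fin n) :
    (∃ q, (addEdge π p q).2 = false) ∧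
    numFaces (addEdge π p) = numFaces π ∧
    eulerGenus (addEdge π p) = eulerGenus π + 1 ∧
    nonOrientGenus (addEdge π p) = eulerGenus π + 1 ∧
    nonOrientGenus (addEdge π p) = nonOrientGenus π ∧
    ¬ HasNontrivialBlock (addEdge π p) := by
  have hneg : ∃ q, (addEdge π p q).2 = false := ⟨p.castSucc, by rw [addEdge_castSucc]⟩
  have hfaces := numFaces_addEdge p hπ hall
  have hgenus : eulerGenus (addEdge π p) = eulerGenus π + 1 := by
    rw [eulerGenus, eulerGenus, hfaces]
    push_cast
    ring
  have hnog : nonOrientGenus (addEdge π p) = eulerGenus π + 1 := by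
    rw [nonOrientGenus, if_pos hneg, hgenus]
  refine ⟨hneg, hfaces, hgenus, hnog, ?_, not_hasNontrivialBlock_addEdge p hπ hall hnoblock⟩
  rw [hnog, nonOrientGenus, if_neg (by simp [hall]), if_neg hg]
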